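/- Let (I,J,K) be a hypercomplex structure on E and let ∇ be defined by ∇_U V = −(1/2)·K(JV∘IU − J(V∘IU) − I(JV∘U) + JI(V∘U)), extended ℂ-bilinearly to E_ℂ. Then for all ξ, η, ζ ∈ L*_J: ∇_ξ η ∈ L*_J and Ω(∇_ξ η, ζ) = ρ(η)Ω(ξ,ζ) − Ω(η∘ξ, ζ) − Ω(ξ, η∘ζ). -/

import Mathlib

/-!
For `η ∈ L*_J` the connection simplifies to `∇_ξ η = ½ K (i w + J w)` with
`w = η ∘ Iξ − I (η ∘ ξ)`. Since `i w + J w` lies in `L_J` and `K` anticommutes with `J`, this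
lands in `L*_J`. Because `K = IJ`, the operator `Ω^♯` agrees with `I` on `L*_J`, and it is skew for
the pairing, so `Ω(x, ζ) = ⟨Ix, ζ⟩` as soon as one argument lies in `L*_J`. Both sides of the
identity then reduce to `⟨w, ζ⟩`, the right-hand side through the invariance
`ρ(η)⟨Iξ, ζ⟩ = ⟨η ∘ Iξ, ζ⟩ + ⟨Iξ, η ∘ ζ⟩`.
-/

open scoped TensorProduct
section BC

variable {M N P : Type} [AddCommGroup M] [Module ℝ M] [AddCommGroup N] [Module ℝ N]
  [AddCommGroup P] [Module ℝ P]

/-- Complex-bilinear extension of an `ℝ`-bilinear map to the complexifications. -/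
noncomputable def bcBilin (B : M →ₗ[ℝ] N →ₗ[ℝ] P) :
    ℂ ⊗[ℝ] M →ₗ[ℂ] ℂ ⊗[ℝ] N →ₗ[ℂ] ℂ ⊗[ℝ] P :=
  LinearMap.liftBaseChange ℂ ((LinearMap.baseChangeHom ℝ ℂ N P) ∘ₗ B)

/-- Complex conjugation on the complexification `ℂ ⊗[ℝ] M`. -/
noncomputable def conjT (M : Type) [AddCommGroup M] [Module ℝ M] :
    ℂ ⊗[ℝ] M →ₗ[ℝ] ℂ ⊗[ℝ] M :=
  TensorProduct.map Complex.conjAe.toLinearMap LinearMap.id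

/-- The `i`-eigenspace of a `ℂ`-linear endomorphism of `ℂ ⊗[ℝ] M`. -/
def eigP (Jc : ℂ ⊗[ℝ] M →ₗ[ℂ] ℂ ⊗[ℝ] M) : Set (ℂ ⊗[ℝ] M) :=
  {e | Jc e = Complex.I • e}

/-- The `-i`-eigenspace of a `ℂ`-linear endomorphism of `ℂ ⊗[ℝ] M`. -/
def eigM (Jc : ℂ ⊗[ℝ] M →ₗ[ℂ] ℂ ⊗[ℝ] M) : Set (ℂ ⊗[ℝ] M) :=
  {e | Jc e = -(Complex.I • e)}

end BC

/-- An (algebraic) Courant algebroid: a commutative `ℝ`-algebra `A`, an `A`-module `E`,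
a nondegenerate symmetric `A`-bilinear pairing, an anchor with values in `ℝ`-linear
derivations of `A`, a map `Dm : A → E`, and an `ℝ`-bilinear Dorfman bracket. -/
structure CourantAlgebroid (A E : Type) [CommRing A] [Algebra ℝ A]
    [AddCommGroup E] [Module ℝ E] [Module A E] [IsScalarTower ℝ A E] : Type where
  pair : E →ₗ[A] E →ₗ[A] A
  pair_symm : ∀ x y, pair x y = pair y x
  pair_nondeg : ∀ x, (∀ y, pair x y = 0) → x = 0
  anchor : E →ₗ[A] Derivation ℝ A A
  Dm : A →ₗ[ℝ] E
  pair_Dm : ∀ (f : A) (x : E), pair (Dm f) x = (1/2 : ℝ) • anchor x f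
  brac : E →ₗ[ℝ] E →ₗ[ℝ] E
  brac_leibniz : ∀ x y z, brac x (brac y z) = brac (brac x y) z + brac y (brac x z)
  anchor_brac : ∀ (x y : E) (f : A),
    anchor (brac x y) f = anchor x (anchor y f) - anchor y (anchor x f)
  brac_smul : ∀ (f : A) (x y : E), brac x (f • y) = anchor x f • y + f • brac x y
  brac_add_swap : ∀ x y, brac x y + brac y x = (2 : ℝ) • Dm (pair x y)
  Dm_brac : ∀ (f : A) (x : E), brac (Dm f) x = 0
  anchor_pair : ∀ x y z, anchor x (pair y z) = pair (brac x y) z + pair y (brac x z)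

namespace CourantAlgebroid

variable {A E : Type} [CommRing A] [Algebra ℝ A]
    [AddCommGroup E] [Module ℝ E] [Module A E] [IsScalarTower ℝ A E]

/-- The Nijenhuis concomitant of two operators with respect to a bracket. -/
def nijGen {M : Type*} [AddCommGroup M] (br : M → M → M) (F G : M → M) (U V : M) : M :=
  br (F U) (G V) - F (br U (G V)) - G (br (F U) V) + F (G (br U V))
    + br (G U) (F V) - G (br U (F V)) - F (br (G U) V) + G (F (br U V))

/-- The Nijenhuis concomitant `N(F,G)` of two `A`-linear endomorphisms of `E`. -/
def nij (C : CourantAlgebroid A E) (F G : E →ₗ[A] E) (U V : E) : E :=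
  nijGen (fun x y => C.brac x y) (fun e => F e) (fun e => G e) U V

/-- An almost complex structure: an orthogonal endomorphism squaring to `-1`. -/
def IsAlmostComplexStr (C : CourantAlgebroid A E) (J : E →ₗ[A] E) : Prop :=
  (∀ e, J (J e) = -e) ∧ ∀ x y, C.pair (J x) (J y) = C.pair x y

/-- A complex structure: an almost complex structure with vanishing Nijenhuis concomitant. -/
def IsComplexStr (C : CourantAlgebroid A E) (J : E →ₗ[A] E) : Prop :=
  C.IsAlmostComplexStr J ∧ ∀ U V, C.nij J J U V = 0

/-- An almost hypercomplex structure: a triple of almost complex structures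
satisfying the quaternionic relations. -/
def IsAlmostHypercomplex (C : CourantAlgebroid A E) (I J K : E →ₗ[A] E) : Prop :=
  C.IsAlmostComplexStr I ∧ C.IsAlmostComplexStr J ∧ C.IsAlmostComplexStr K ∧
    ∀ e, I (J (K e)) = -e

/-- A hypercomplex structure: an almost hypercomplex structure all of whose six
Nijenhuis concomitants vanish. -/
def IsHypercomplex (C : CourantAlgebroid A E) (I J K : E →ₗ[A] E) : Prop :=
  C.IsAlmostHypercomplex I J K ∧
    (∀ U V, C.nij I I U V = 0) ∧ (∀ U V, C.nij I J U V = 0) ∧ (∀ U V, C.nij I K U V = 0) ∧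
    (∀ U V, C.nij J J U V = 0) ∧ (∀ U V, C.nij J K U V = 0) ∧ (∀ U V, C.nij K K U V = 0)

/-- The Poisson-type bracket on `A` induced by a skew-symmetric endomorphism `F`. -/
def pb (C : CourantAlgebroid A E) (F : E →ₗ[A] E) (f g : A) : A :=
  C.pair (F (C.Dm f)) (C.Dm g)

/-- `Δ_f(U,V)` associated with an almost hypercomplex triple. -/
def Delta (C : CourantAlgebroid A E) (I J K : E →ₗ[A] E) (f : A) (U V : E) : E :=
  C.pair U V • C.Dm f + C.pair (I U) V • I (C.Dm f) + C.pair (J U) V • J (C.Dm f)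
    + C.pair (K U) V • K (C.Dm f)

/-- A hypercomplex connection relative to an almost hypercomplex triple. -/
def IsHConn (C : CourantAlgebroid A E) (I J K : E →ₗ[A] E)
    (conn : E →ₗ[ℝ] E →ₗ[ℝ] E) : Prop :=
  (∀ (f : A) (U V : E), conn (f • U) V = f • conn U V) ∧
  (∀ (f : A) (U V : E),
    conn U (f • V) = C.anchor U f • V + f • conn U V - C.Delta I J K f U V)

/-- The torsion of an `ℝ`-bilinear connection. -/
noncomputable def torsion (C : CourantAlgebroid A E) (conn : E →ₗ[ℝ] E →ₗ[ℝ] E) (U V : E) : E :=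
  conn U V - conn V U - (1/2 : ℝ) • (C.brac U V - C.brac V U)

/-- The canonical hypercomplex connection. -/
noncomputable def hconn (C : CourantAlgebroid A E) (I J K : E →ₗ[A] E) (U V : E) : E :=
  -((1/2 : ℝ) • K (C.brac (J V) (I U) - J (C.brac V (I U)) - I (C.brac (J V) U)
      + J (I (C.brac V U))))

/-- The pairing as an `ℝ`-bilinear map. -/
noncomputable def pairR (C : CourantAlgebroid A E) : E →ₗ[ℝ] E →ₗ[ℝ] A :=
  LinearMap.mk₂ ℝ (fun x y => C.pair x y)
    (fun x x' y => by simp)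
    (fun r x y => by
      show C.pair (r • x) y = r • C.pair x y
      rw [← algebraMap_smul A r x, map_smul, LinearMap.smul_apply, algebraMap_smul])
    (fun x y y' => by simp)
    (fun r x y => by
      show C.pair x (r • y) = r • C.pair x y
      rw [← algebraMap_smul A r y, map_smul, algebraMap_smul])

/-- The anchor as an `ℝ`-bilinear map `E → A → A`. -/
noncomputable def rhoR (C : CourantAlgebroid A E) : E →ₗ[ℝ] A →ₗ[ℝ] A :=
  LinearMap.mk₂ ℝ (fun x f => C.anchor x f)
    (fun x x' f => by simp)
    (fun r x f => by
      show C.anchor (r • x) f = r • C.anchor x f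
      rw [← algebraMap_smul A r x, map_smul, Derivation.smul_apply, algebraMap_smul])
    (fun x f f' => by simp)
    (fun r x f => by simp)

/-- The `A`-module structure on `E` as an `ℝ`-bilinear map. -/
noncomputable def smulR (A E : Type) [CommRing A] [Algebra ℝ A]
    [AddCommGroup E] [Module ℝ E] [Module A E] [IsScalarTower ℝ A E] :
    A →ₗ[ℝ] E →ₗ[ℝ] E :=
  LinearMap.mk₂ ℝ (fun a e => a • e)
    (fun a a' e => add_smul a a' e)
    (fun r a e => smul_assoc r a e)
    (fun a e e' => smul_add a e e')
    (fun r a e => smul_comm a r e)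

/-- Complex-bilinear extension of the pairing. -/
noncomputable def pairC (C : CourantAlgebroid A E) :
    ℂ ⊗[ℝ] E →ₗ[ℂ] ℂ ⊗[ℝ] E →ₗ[ℂ] ℂ ⊗[ℝ] A := bcBilin C.pairR

/-- Complex-bilinear extension of the Dorfman bracket. -/
noncomputable def bracC (C : CourantAlgebroid A E) :
    ℂ ⊗[ℝ] E →ₗ[ℂ] ℂ ⊗[ℝ] E →ₗ[ℂ] ℂ ⊗[ℝ] E := bcBilin C.brac

/-- Complex-bilinear extension of the anchor. -/
noncomputable def rhoC (C : CourantAlgebroid A E) :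
    ℂ ⊗[ℝ] E →ₗ[ℂ] ℂ ⊗[ℝ] A →ₗ[ℂ] ℂ ⊗[ℝ] A := bcBilin C.rhoR

/-- Complex-bilinear extension of the `A`-action on `E`. -/
noncomputable def smulC (C : CourantAlgebroid A E) :
    ℂ ⊗[ℝ] A →ₗ[ℂ] ℂ ⊗[ℝ] E →ₗ[ℂ] ℂ ⊗[ℝ] E := bcBilin (smulR A E)

/-- The `ℂ`-linear extension of an `A`-linear endomorphism of `E` to `ℂ ⊗[ℝ] E`. -/
noncomputable def cext (F : E →ₗ[A] E) : ℂ ⊗[ℝ] E →ₗ[ℂ] ℂ ⊗[ℝ] E :=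
  (F.restrictScalars ℝ).baseChange ℂ

/-- `Ω^♯ = (1/2)(I + iK)` associated with an (almost) hypercomplex triple. -/
noncomputable def OmS (I K : E →ₗ[A] E) : ℂ ⊗[ℝ] E →ₗ[ℂ] ℂ ⊗[ℝ] E :=
  (1/2 : ℂ) • (cext I + Complex.I • cext K)

/-- `Ω̄^♯ = (1/2)(I - iK)` associated with an (almost) hypercomplex triple. -/
noncomputable def ObS (I K : E →ₗ[A] E) : ℂ ⊗[ℝ] E →ₗ[ℂ] ℂ ⊗[ℝ] E :=
  (1/2 : ℂ) • (cext I - Complex.I • cext K)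

/-- `Ω(ξ,η) = ⟨Ω^♯ξ, η⟩`. -/
noncomputable def Omf (C : CourantAlgebroid A E) (I K : E →ₗ[A] E)
    (x y : ℂ ⊗[ℝ] E) : ℂ ⊗[ℝ] A :=
  C.pairC (OmS I K x) y

/-- The complexified hypercomplex connection on `ℂ ⊗[ℝ] E`. -/
noncomputable def hconnC (C : CourantAlgebroid A E) (I J K : E →ₗ[A] E)
    (U V : ℂ ⊗[ℝ] E) : ℂ ⊗[ℝ] E :=
  -((1/2 : ℂ) • cext K (C.bracC (cext J V) (cext I U) - cext J (C.bracC V (cext I U))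
      - cext I (C.bracC (cext J V) U) + cext J (cext I (C.bracC V U))))

end CourantAlgebroid

open CourantAlgebroid

section Complexification

variable {M N P : Type} [AddCommGroup M] [Module ℝ M] [AddCommGroup N] [Module ℝ N]
  [AddCommGroup P] [Module ℝ P]

lemma bcBilin_tmul (B : M →ₗ[ℝ] N →ₗ[ℝ] P) (z w : ℂ) (m : M) (n : N) :
    bcBilin B (z ⊗ₜ m) (w ⊗ₜ n) = (z * w) ⊗ₜ B m n := by
  simp [bcBilin, LinearMap.liftBaseChange_tmul, TensorProduct.smul_tmul', smul_eq_mul]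

variable {Jc Kc : ℂ ⊗[ℝ] M →ₗ[ℂ] ℂ ⊗[ℝ] M}

lemma smul_mem_eigM (c : ℂ) {x : ℂ ⊗[ℝ] M} (hx : x ∈ eigM Jc) : c • x ∈ eigM Jc := by
  simp only [eigM, Set.mem_ofPred_eq] at hx ⊢
  rw [map_smul, hx, smul_neg, smul_comm]

lemma smul_I_add_mem_eigP (hJ : ∀ x, Jc (Jc x) = -x) (x : ℂ ⊗[ℝ] M) :
    Complex.I • x + Jc x ∈ eigP Jc := by
  show Jc (Complex.I • x + Jc x) = Complex.I • (Complex.I • x + Jc x)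
  rw [map_add, map_smul, hJ, smul_add, smul_smul, Complex.I_mul_I, neg_one_smul]
  abel

lemma mem_eigM_of_anticomm (hJK : ∀ x, Jc (Kc x) = -Kc (Jc x)) {x : ℂ ⊗[ℝ] M}
    (hx : x ∈ eigP Jc) : Kc x ∈ eigM Jc := by
  show Jc (Kc x) = -(Complex.I • Kc x)
  rw [hJK, show Jc x = Complex.I • x from hx, map_smul]

end Complexification

namespace CourantAlgebroid

variable {A E : Type} [CommRing A] [Algebra ℝ A] [AddCommGroup E] [Module ℝ E]
    [Module A E] [IsScalarTower ℝ A E]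

section Extension

lemma cext_tmul (F : E →ₗ[A] E) (z : ℂ) (e : E) : cext F (z ⊗ₜ e) = z ⊗ₜ F e := rfl

lemma cext_cext_apply {F G H : E →ₗ[A] E} (h : ∀ e, F (G e) = H e) (x : ℂ ⊗[ℝ] E) :
    cext F (cext G x) = cext H x := by
  induction x using TensorProduct.induction_on with
  | zero => simp
  | tmul z e => rw [cext_tmul, cext_tmul, cext_tmul, h]
  | add a b ha hb => simp only [map_add, ha, hb]

lemma cext_cext_apply_neg {F G H : E →ₗ[A] E} (h : ∀ e, F (G e) = -H e) (x : ℂ ⊗[ℝ] E) :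
    cext F (cext G x) = -cext H x := by
  rw [cext_cext_apply (H := -H) h, cext, LinearMap.restrictScalars_neg,
    LinearMap.baseChange_neg, LinearMap.neg_apply, cext]

variable (C : CourantAlgebroid A E)

lemma pairC_tmul (z w : ℂ) (e f : E) :
    C.pairC (z ⊗ₜ e) (w ⊗ₜ f) = (z * w) ⊗ₜ C.pair e f :=
  bcBilin_tmul _ z w e f

lemma bracC_tmul (z w : ℂ) (e f : E) :
    C.bracC (z ⊗ₜ e) (w ⊗ₜ f) = (z * w) ⊗ₜ C.brac e f :=
  bcBilin_tmul _ z w e f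

lemma rhoC_tmul (z w : ℂ) (e : E) (f : A) :
    C.rhoC (z ⊗ₜ e) (w ⊗ₜ f) = (z * w) ⊗ₜ C.anchor e f :=
  bcBilin_tmul _ z w e f

lemma pairC_cext_cext {F : E →ₗ[A] E} (hF : ∀ x y, C.pair (F x) (F y) = C.pair x y)
    (x y : ℂ ⊗[ℝ] E) : C.pairC (cext F x) (cext F y) = C.pairC x y := by
  induction x using TensorProduct.induction_on with
  | zero => simp
  | add a b ha hb => simp only [map_add, LinearMap.add_apply, ha, hb]
  | tmul z e =>
    induction y using TensorProduct.induction_on with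
    | zero => simp
    | add a b ha hb => simp only [map_add, ha, hb]
    | tmul w f => rw [cext_tmul, cext_tmul, pairC_tmul, pairC_tmul, hF]

lemma rhoC_pairC (x y z : ℂ ⊗[ℝ] E) :
    C.rhoC x (C.pairC y z) = C.pairC (C.bracC x y) z + C.pairC y (C.bracC x z) := by
  induction x using TensorProduct.induction_on with
  | zero => simp
  | add a b ha hb => simp only [map_add, LinearMap.add_apply, ha, hb]; abel
  | tmul zx ex =>
    induction y using TensorProduct.induction_on with
    | zero => simp
    | add a b ha hb => simp only [map_add, LinearMap.add_apply, ha, hb]; abel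
    | tmul zy ey =>
      induction z using TensorProduct.induction_on with
      | zero => simp
      | add a b ha hb => simp only [map_add, ha, hb]; abel
      | tmul zz ez =>
        rw [pairC_tmul, rhoC_tmul, bracC_tmul, bracC_tmul, pairC_tmul, pairC_tmul,
          C.anchor_pair, TensorProduct.tmul_add, mul_left_comm zy zx zz, mul_assoc]

end Extension

namespace IsAlmostComplexStr

variable {C : CourantAlgebroid A E} {J : E →ₗ[A] E} (hJ : C.IsAlmostComplexStr J)
include hJ

lemma cext_cext (x : ℂ ⊗[ℝ] E) : cext J (cext J x) = -x := by
  rw [cext_cext_apply_neg (H := LinearMap.id) hJ.1]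
  simp [cext]

lemma pairC_cext_left (x y : ℂ ⊗[ℝ] E) :
    C.pairC (cext J x) y = -C.pairC x (cext J y) := by
  have h := C.pairC_cext_cext hJ.2 x (cext J y)
  rw [hJ.cext_cext, map_neg] at h
  rw [← h, neg_neg]

lemma pairC_cext_of_mem_eigM {ζ : ℂ ⊗[ℝ] E} (hζ : ζ ∈ eigM (cext J)) (x : ℂ ⊗[ℝ] E) :
    C.pairC (cext J x) ζ = Complex.I • C.pairC x ζ := by
  rw [hJ.pairC_cext_left, show cext J ζ = -(Complex.I • ζ) from hζ, map_neg, map_smul, neg_neg]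

end IsAlmostComplexStr

lemma hconnC_of_mem_eigM_right (C : CourantAlgebroid A E) (I J K : E →ₗ[A] E)
    (ξ : ℂ ⊗[ℝ] E) {η w : ℂ ⊗[ℝ] E} (hη : η ∈ eigM (cext J))
    (hw : w = C.bracC η (cext I ξ) - cext I (C.bracC η ξ)) :
    C.hconnC I J K ξ η = (1/2 : ℂ) • cext K (Complex.I • w + cext J w) := by
  rw [hconnC, show cext J η = -(Complex.I • η) from hη, hw]
  simp only [map_neg, map_smul, map_add, map_sub, LinearMap.neg_apply, LinearMap.smul_apply]
  module

namespace IsAlmostHypercomplex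

variable {C : CourantAlgebroid A E} {I J K : E →ₗ[A] E} (h : C.IsAlmostHypercomplex I J K)
include h

lemma I_J_apply (e : E) : I (J e) = K e := by
  have hKK : K (-K e) = e := by rw [map_neg, h.2.2.1.1, neg_neg]
  calc I (J e) = I (J (K (-K e))) := by rw [hKK]
    _ = K e := by rw [h.2.2.2, neg_neg]

lemma I_K_apply (e : E) : I (K e) = -J e := by
  rw [← h.I_J_apply, h.1.1]

lemma J_K_apply (e : E) : J (K e) = I e := by
  have hI := congrArg I (h.2.2.2 e)
  rwa [h.1.1, map_neg, neg_inj] at hI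

lemma K_J_apply (e : E) : K (J e) = -I e := by
  rw [← h.I_J_apply, h.2.1.1, map_neg]

lemma cext_J_cext_K (x : ℂ ⊗[ℝ] E) : cext J (cext K x) = -cext K (cext J x) := by
  rw [cext_cext_apply h.J_K_apply, cext_cext_apply_neg h.K_J_apply, neg_neg]

lemma OmS_of_mem_eigM {ξ : ℂ ⊗[ℝ] E} (hξ : ξ ∈ eigM (cext J)) : OmS I K ξ = cext I ξ := by
  rw [OmS, LinearMap.smul_apply, LinearMap.add_apply, LinearMap.smul_apply,
    ← cext_cext_apply h.I_J_apply, show cext J ξ = -(Complex.I • ξ) from hξ, map_neg,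
    map_smul, smul_neg, smul_smul, Complex.I_mul_I, neg_one_smul, neg_neg]
  module

lemma pairC_OmS_left (x y : ℂ ⊗[ℝ] E) : C.pairC (OmS I K x) y = -C.pairC x (OmS I K y) := by
  simp only [OmS, LinearMap.smul_apply, LinearMap.add_apply, map_smul, map_add,
    LinearMap.smul_apply, LinearMap.add_apply, h.1.pairC_cext_left, h.2.2.1.pairC_cext_left]
  module

lemma Omf_of_mem_eigM_left {ξ : ℂ ⊗[ℝ] E} (hξ : ξ ∈ eigM (cext J)) (y : ℂ ⊗[ℝ] E) :
    C.Omf I K ξ y = C.pairC (cext I ξ) y := by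
  rw [Omf, h.OmS_of_mem_eigM hξ]

lemma Omf_of_mem_eigM_right {ζ : ℂ ⊗[ℝ] E} (hζ : ζ ∈ eigM (cext J)) (x : ℂ ⊗[ℝ] E) :
    C.Omf I K x ζ = C.pairC (cext I x) ζ := by
  rw [Omf, h.pairC_OmS_left, h.OmS_of_mem_eigM hζ, h.1.pairC_cext_left]

end IsAlmostHypercomplex

end CourantAlgebroid

theorem stmt17 {A E : Type} [CommRing A] [Algebra ℝ A] [AddCommGroup E] [Module ℝ E]
    [Module A E] [IsScalarTower ℝ A E] (C : CourantAlgebroid A E) (I J K : E →ₗ[A] E)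
    (h : C.IsHypercomplex I J K) :
    ∀ ξ η ζ : ℂ ⊗[ℝ] E, ξ ∈ eigM (cext J) → η ∈ eigM (cext J) → ζ ∈ eigM (cext J) →
      C.hconnC I J K ξ η ∈ eigM (cext (A := A) (E := E) J) ∧
      C.Omf I K (C.hconnC I J K ξ η) ζ =
        C.rhoC η (C.Omf I K ξ ζ) - C.Omf I K (C.bracC η ξ) ζ
          - C.Omf I K ξ (C.bracC η ζ) := by
  intro ξ η ζ hξ hη hζ
  obtain ⟨hq, -⟩ := h
  have hJ := hq.2.1
  set w := C.bracC η (cext I ξ) - cext I (C.bracC η ξ) with hw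
  have hconn := hconnC_of_mem_eigM_right C I J K ξ hη hw
  refine ⟨?_, ?_⟩
  · rw [hconn]
    exact smul_mem_eigM _ (mem_eigM_of_anticomm hq.cext_J_cext_K
      (smul_I_add_mem_eigP hJ.cext_cext w))
  · have lhs : C.Omf I K (C.hconnC I J K ξ η) ζ = C.pairC w ζ := by
      rw [hq.Omf_of_mem_eigM_right hζ, hconn, map_smul, cext_cext_apply_neg hq.I_K_apply,
        map_smul, map_neg, LinearMap.smul_apply, LinearMap.neg_apply,
        hJ.pairC_cext_of_mem_eigM hζ, map_add, LinearMap.add_apply, map_smul,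
        LinearMap.smul_apply, hJ.pairC_cext_of_mem_eigM hζ, smul_add, smul_smul,
        Complex.I_mul_I]
      module
    rw [lhs, hq.Omf_of_mem_eigM_left hξ, hq.Omf_of_mem_eigM_left hξ,
      hq.Omf_of_mem_eigM_right hζ, rhoC_pairC, hw, map_sub, LinearMap.sub_apply]
    abel
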